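/- Let s ∈ ℂ ∖ (−∞,0] and set ω := Re(s^{1/2}) > 0. For every Schwartz function z : ℝ³ → ℂ, setting g := −Δz + s·z, the full second-derivative (H² semi-norm) bound Σ_{i,j=1}^{3} ‖∂_i∂_j z‖²_{L²(ℝ³)} ≤ 4·(|s|/ω²)·‖g‖²_{L²(ℝ³)} holds. -/

import Mathlib

/-!
With `u := z` and `w := Δz` in `L²`, integration by parts gives `∑ ‖∂ᵢ∂ⱼz‖² = ‖Δz‖²`,
`⟪Δz, z⟫ = -∑ ‖∂ᵢz‖² ≤ 0` and `g = s • u - w`. The estimate is then a fact about two vectors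
of a complex Hilbert space with `⟪w, u⟫ ≤ 0`: if `Re s ≥ 0`, expanding
`‖s • u - w‖² = |s|²‖u‖² - 2 Re s ⟪w, u⟫ + ‖w‖²` shows `‖w‖ ≤ ‖s • u - w‖`; if `Re s < 0`,
the identity `|s|²‖s • u - w‖² = (|s|² - (Re s)²)‖w‖² + ‖Re s • w - |s|² • u‖²` gives
`‖w‖²(|s| + Re s) ≤ |s|‖s • u - w‖²`. As `2ω² = |s| + Re s`, either case yields the bound, even
with `1` in place of `4`.
-/

noncomputable def pd (i : Fin 3) (z : EuclideanSpace ℝ (Fin 3) → ℂ)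
    (x : EuclideanSpace ℝ (Fin 3)) : ℂ :=
  deriv (fun t : ℝ => z (x + t • EuclideanSpace.single i (1 : ℝ))) 0

noncomputable def lap (z : EuclideanSpace ℝ (Fin 3) → ℂ)
    (x : EuclideanSpace ℝ (Fin 3)) : ℂ :=
  ∑ i : Fin 3, iteratedDeriv 2 (fun t : ℝ => z (x + t • EuclideanSpace.single i (1 : ℝ))) 0

open MeasureTheory SchwartzMap LineDeriv
open scoped Laplacian ComplexOrder InnerProductSpace

theorem Complex.norm_add_re_pos_of_mem_slitPlane {s : ℂ} (hs : s ∈ Complex.slitPlane) :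
    0 < ‖s‖ + s.re := by
  rcases Complex.mem_slitPlane_iff.mp hs with hre | him
  · linarith [norm_nonneg s]
  · linarith [neg_abs_le s.re, Complex.abs_re_lt_norm.mpr him]

theorem Complex.sq_re_cpow_half (s : ℂ) : (s ^ (1 / 2 : ℂ)).re ^ 2 = (‖s‖ + s.re) / 2 := by
  have hr : (s ^ (1 / 2 : ℂ)) ^ 2 = s := by
    rw [show (1 / 2 : ℂ) = ((2 : ℕ) : ℂ)⁻¹ by norm_num]
    exact Complex.cpow_nat_inv_pow s two_ne_zero
  generalize s ^ (1 / 2 : ℂ) = r at hr ⊢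
  subst hr
  rw [norm_pow, Complex.sq_norm, Complex.normSq_apply, sq r, Complex.mul_re]
  ring

section InnerProductSpace

variable {H : Type*} [NormedAddCommGroup H] [InnerProductSpace ℂ H]

theorem Complex.zero_le_inner_self (x : H) : 0 ≤ ⟪x, x⟫_ℂ :=
  Complex.nonneg_iff.mpr ⟨inner_self_nonneg (𝕜 := ℂ) (x := x), (inner_self_im (𝕜 := ℂ) x).symm⟩

theorem norm_smul_sub_sq_of_inner_eq_ofReal (s : ℂ) {u w : H} {r : ℝ} (hwu : ⟪w, u⟫_ℂ = r) :
    ‖s • u - w‖ ^ 2 = ‖s‖ ^ 2 * ‖u‖ ^ 2 - 2 * s.re * r + ‖w‖ ^ 2 := by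
  rw [@norm_sub_sq ℂ, norm_smul, inner_smul_left, ← inner_conj_symm, hwu]
  simp only [Complex.conj_ofReal, RCLike.mul_re, RCLike.conj_re, RCLike.re_to_complex,
    Complex.ofReal_re, RCLike.conj_im, RCLike.im_to_complex, Complex.ofReal_im]
  ring

theorem sq_norm_mul_le_of_inner_eq_ofReal (s : ℂ) {u w : H} {r : ℝ} (hwu : ⟪w, u⟫_ℂ = r) :
    (‖s‖ ^ 2 - s.re ^ 2) * ‖w‖ ^ 2 ≤ ‖s‖ ^ 2 * ‖s • u - w‖ ^ 2 := by
  have hsq : ‖(s.re : ℂ) • w - ((‖s‖ ^ 2 : ℝ) : ℂ) • u‖ ^ 2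
      = s.re ^ 2 * ‖w‖ ^ 2 - 2 * s.re * ‖s‖ ^ 2 * r + ‖s‖ ^ 4 * ‖u‖ ^ 2 := by
    rw [@norm_sub_sq ℂ, norm_smul, norm_smul, inner_smul_left, inner_smul_right, hwu]
    simp only [Complex.norm_real, Real.norm_eq_abs, Complex.conj_ofReal, RCLike.mul_re,
      RCLike.re_to_complex, Complex.ofReal_re, RCLike.im_to_complex, Complex.ofReal_im,
      abs_of_nonneg (sq_nonneg ‖s‖), mul_pow, sq_abs]
    ring
  rw [norm_smul_sub_sq_of_inner_eq_ofReal s hwu]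
  nlinarith [sq_nonneg ‖(s.re : ℂ) • w - ((‖s‖ ^ 2 : ℝ) : ℂ) • u‖]

theorem sq_norm_mul_le_of_inner_nonpos (s : ℂ) {u w : H} (hwu : ⟪w, u⟫_ℂ ≤ 0) :
    ‖w‖ ^ 2 * (‖s‖ + s.re) ≤ 2 * ‖s‖ * ‖s • u - w‖ ^ 2 := by
  obtain ⟨hr, him⟩ := Complex.nonpos_iff.mp hwu
  have hwu' : ⟪w, u⟫_ℂ = ((⟪w, u⟫_ℂ).re : ℂ) := Complex.ext rfl (by simp [him])
  have hre := Complex.abs_re_le_norm s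
  rcases le_or_gt 0 s.re with hσ | hσ
  · have hA : ‖w‖ ^ 2 ≤ ‖s • u - w‖ ^ 2 := by
      rw [norm_smul_sub_sq_of_inner_eq_ofReal s hwu']
      nlinarith [mul_nonneg hσ (neg_nonneg.mpr hr)]
    nlinarith [abs_of_nonneg hσ, sq_nonneg ‖w‖]
  · have hS : 0 < ‖s‖ := by linarith [abs_of_neg hσ]
    refine le_of_mul_le_mul_left ?_ hS
    calc ‖s‖ * (‖w‖ ^ 2 * (‖s‖ + s.re)) ≤ (‖s‖ ^ 2 - s.re ^ 2) * ‖w‖ ^ 2 := by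
          nlinarith [mul_nonneg (mul_nonneg (sq_nonneg ‖w‖) (neg_nonneg.mpr hσ.le))
            (show 0 ≤ ‖s‖ + s.re by linarith [abs_of_neg hσ])]
      _ ≤ ‖s‖ ^ 2 * ‖s • u - w‖ ^ 2 := sq_norm_mul_le_of_inner_eq_ofReal s hwu'
      _ ≤ ‖s‖ * (2 * ‖s‖ * ‖s • u - w‖ ^ 2) := by
          nlinarith [mul_nonneg (sq_nonneg ‖s‖) (sq_nonneg ‖s • u - w‖)]

end InnerProductSpace

namespace SchwartzMap

section LineDeriv

variable {E F : Type*} [NormedAddCommGroup E] [NormedSpace ℝ E]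
  [NormedAddCommGroup F] [NormedSpace ℝ F]

theorem lineDerivOp_comm (u : 𝓢(E, F)) (v w : E) : ∂_{v} (∂_{w} u) = ∂_{w} (∂_{v} u) := by
  ext x
  have hsymm := ((u.smooth 2).contDiffAt (x := x)).isSymmSndFDerivAt (by simp) v w
  have hsnd : ∀ a b : E, ∂_{a} (∂_{b} u) x = fderiv ℝ (fderiv ℝ u) x a b := by
    intro a b
    simpa [iteratedLineDerivOp_succ_left, iteratedFDeriv_two_apply] using
      iteratedLineDerivOp_eq_iteratedFDeriv (m := ![a, b]) (f := u) (x := x)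
  rw [hsnd, hsnd, hsymm]

theorem hasDerivAt_comp_lineMap (u : 𝓢(E, F)) (x v : E) (t : ℝ) :
    HasDerivAt (fun t : ℝ => u (x + t • v)) (∂_{v} u (x + t • v)) t := by
  rw [lineDerivOp_apply_eq_fderiv]
  have hline : HasDerivAt (fun t : ℝ => x + t • v) v t := by
    simpa using ((hasDerivAt_id t).smul_const v).const_add x
  exact u.differentiableAt.hasFDerivAt.comp_hasDerivAt t hline

theorem iteratedDeriv_two_comp_lineMap (u : 𝓢(E, F)) (x v : E) :
    iteratedDeriv 2 (fun t : ℝ => u (x + t • v)) 0 = ∂_{v} (∂_{v} u) x := by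
  have hderiv : deriv (fun t : ℝ => u (x + t • v)) = fun t => ∂_{v} u (x + t • v) :=
    funext fun t => (u.hasDerivAt_comp_lineMap x v t).deriv
  rw [iteratedDeriv_succ, iteratedDeriv_one, hderiv,
    (hasDerivAt_comp_lineMap (∂_{v} u) x v 0).deriv, zero_smul, add_zero]

end LineDeriv

section L2

variable {D V : Type*} [NormedAddCommGroup D] [NormedSpace ℝ D] [FiniteDimensional ℝ D]
  [MeasurableSpace D] [BorelSpace D] {μ : Measure D} [μ.IsAddHaarMeasure]
  [NormedAddCommGroup V] [NormedSpace ℝ V]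

theorem norm_toL2_sq (u : 𝓢(D, V)) : ‖u.toLp 2 μ‖ ^ 2 = ∫ x, ‖u x‖ ^ 2 ∂μ := by
  rw [norm_toLp' (by norm_num) (by norm_num)]
  simp only [ENNReal.toReal_ofNat, Real.rpow_two]
  rw [← Real.rpow_natCast, ← Real.rpow_mul (integral_nonneg fun x => by positivity)]
  norm_num

theorem toLp_sum {ι : Type*} [Fintype ι] (f : ι → 𝓢(D, V)) :
    (∑ i, f i).toLp 2 μ = ∑ i, (f i).toLp 2 μ :=
  map_sum (toLpCLM ℝ V 2 μ) f Finset.univ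

theorem inner_toL2_lineDerivOp_left (u v : 𝓢(D, ℂ)) (m : D) :
    ⟪(∂_{m} u).toLp 2 μ, v.toLp 2 μ⟫_ℂ = -⟪u.toLp 2 μ, (∂_{m} v).toLp 2 μ⟫_ℂ := by
  have h := integral_bilinear_lineDerivOp_right_eq_neg_left (μ := μ) u v
    ((ContinuousLinearMap.mul ℝ ℂ).comp Complex.conjCLE.toContinuousLinearMap) m
  simp only [ContinuousLinearMap.comp_apply, ContinuousLinearMap.mul_apply',
    ContinuousLinearEquiv.coe_coe, Complex.conjCLE_apply] at h
  simp only [inner_toL2_toL2_eq, RCLike.inner_apply, mul_comm (v _), mul_comm ((∂_{m} v) _)]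
  exact neg_eq_iff_eq_neg.mp h.symm

end L2

section Laplacian

variable {E : Type*} [NormedAddCommGroup E] [InnerProductSpace ℝ E] [FiniteDimensional ℝ E]
  [MeasurableSpace E] [BorelSpace E] {μ : Measure E} [μ.IsAddHaarMeasure]

theorem inner_toL2_laplacian_self_nonpos (u : 𝓢(E, ℂ)) :
    ⟪(Δ u).toLp 2 μ, u.toLp 2 μ⟫_ℂ ≤ 0 := by
  rw [laplacian_eq_sum (stdOrthonormalBasis ℝ E), toLp_sum, sum_inner]
  refine Finset.sum_nonpos fun i _ => ?_
  rw [inner_toL2_lineDerivOp_left, neg_nonpos]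
  exact Complex.zero_le_inner_self _

theorem inner_toL2_lineDerivOp_lineDerivOp (u : 𝓢(E, ℂ)) (v w : E) :
    ⟪(∂_{v} (∂_{v} u)).toLp 2 μ, (∂_{w} (∂_{w} u)).toLp 2 μ⟫_ℂ
      = ⟪(∂_{w} (∂_{v} u)).toLp 2 μ, (∂_{w} (∂_{v} u)).toLp 2 μ⟫_ℂ := by
  rw [inner_toL2_lineDerivOp_left, lineDerivOp_comm (∂_{w} u) v w,
    ← inner_toL2_lineDerivOp_left, lineDerivOp_comm u v w]

theorem sum_sq_norm_toL2_lineDerivOp_lineDerivOp {ι : Type*} [Fintype ι]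
    (b : OrthonormalBasis ι ℝ E) (u : 𝓢(E, ℂ)) :
    ∑ i, ∑ j, ‖(∂_{b i} (∂_{b j} u)).toLp 2 μ‖ ^ 2 = ‖(Δ u).toLp 2 μ‖ ^ 2 := by
  simp_rw [@norm_sq_eq_re_inner ℂ, laplacian_eq_sum b, toLp_sum, sum_inner, inner_sum,
    inner_toL2_lineDerivOp_lineDerivOp, map_sum]
  exact Finset.sum_comm

end Laplacian

end SchwartzMap

theorem pd_eq_lineDerivOp (i : Fin 3) (u : 𝓢(EuclideanSpace ℝ (Fin 3), ℂ)) :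
    pd i ⇑u = ⇑(∂_{EuclideanSpace.basisFun (Fin 3) ℝ i} u : 𝓢(EuclideanSpace ℝ (Fin 3), ℂ)) := by
  funext x
  rw [EuclideanSpace.basisFun_apply, lineDerivOp_apply]
  rfl

theorem lap_eq_laplacian (u : 𝓢(EuclideanSpace ℝ (Fin 3), ℂ)) :
    lap ⇑u = ⇑(Δ u : 𝓢(EuclideanSpace ℝ (Fin 3), ℂ)) := by
  funext x
  simp [lap, laplacian_eq_sum (EuclideanSpace.basisFun (Fin 3) ℝ), iteratedDeriv_two_comp_lineMap,
    sum_apply]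

/-- For `s` in the slit plane with `ω := Re(s^{1/2}) > 0` and a Schwartz function
`z : ℝ³ → ℂ`, setting `g := −Δz + s·z`, the full second-derivative (H² semi-norm) bound
`Σ_{i,j} ‖∂_i∂_j z‖²_{L²} ≤ 4·(|s|/ω²)·‖g‖²_{L²}` holds. -/
theorem stmt5 (s : ℂ) (hs : s ∈ Complex.slitPlane)
    (z : SchwartzMap (EuclideanSpace ℝ (Fin 3)) ℂ)
    (g : EuclideanSpace ℝ (Fin 3) → ℂ)
    (hg : ∀ x, g x = -lap (⇑z) x + s * z x) :
    ∑ i : Fin 3, ∑ j : Fin 3, (∫ x, ‖pd i (pd j (⇑z)) x‖ ^ 2)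
      ≤ 4 * (‖s‖ / ((s ^ (1 / 2 : ℂ)).re) ^ 2) * ∫ x, ‖g x‖ ^ 2 := by
  have hLHS : ∑ i : Fin 3, ∑ j : Fin 3, (∫ x, ‖pd i (pd j (⇑z)) x‖ ^ 2)
      = ‖(Δ z).toLp 2‖ ^ 2 := by
    simp_rw [pd_eq_lineDerivOp, ← norm_toL2_sq]
    exact sum_sq_norm_toL2_lineDerivOp_lineDerivOp _ z
  have hRHS : ∫ x, ‖g x‖ ^ 2 = ‖s • z.toLp 2 - (Δ z).toLp 2‖ ^ 2 := by
    have hg' : g = ⇑(s • z - Δ z) := by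
      funext x
      rw [hg, lap_eq_laplacian, sub_apply, smul_apply, smul_eq_mul]
      ring
    rw [hg', ← norm_toL2_sq, ← toLpCLM_apply (𝕜 := ℂ), map_sub, map_smul]
    rfl
  have hbound := sq_norm_mul_le_of_inner_nonpos s (inner_toL2_laplacian_self_nonpos (μ := volume) z)
  have hpos := Complex.norm_add_re_pos_of_mem_slitPlane hs
  rw [hLHS, hRHS, Complex.sq_re_cpow_half,
    show 4 * (‖s‖ / ((‖s‖ + s.re) / 2)) = 8 * ‖s‖ / (‖s‖ + s.re) by field_simp; ring,
    div_mul_eq_mul_div, le_div_iff₀ hpos]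
  nlinarith [norm_nonneg s, sq_nonneg ‖s • z.toLp 2 - (Δ z).toLp 2‖]
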